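/- arXiv:2203.11448 — 3 statements merged into one kernel-verified Lean document; each statement's English description precedes it below -/
import Mathlib

section
/- Suppose z1, z2, z3, z4, z5 ∈ {0,1} satisfy z1 + z2 + z3 + z4 + z5 ≤ 4, and the real numbers V, Q together with a real number M satisfy all of the Big-M constraints (21)–(30). Then Q = f(V), i.e., the Big-M mixed-integer constraints force the inverter's reactive power output to lie exactly on the IEEE 1547-2018 Volt-VAr droop curve. -/
/-- The IEEE 1547-2018 Volt-VAr droop characteristic (Q–V curve) of a PV smart inverter. -/
noncomputable def voltVarDroop (Qmax V1 V2 V3 V4 : ℝ) (V : ℝ) : ℝ :=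
  if V < V1 then Qmax
  else if V < V2 then Qmax * (V2 - V) / (V2 - V1)
  else if V < V3 then 0
  else if V < V4 then -Qmax * (V - V3) / (V4 - V3)
  else -Qmax

/-- The Big-M constraints (21)–(30) on the voltage `V`, reactive power `Q`, and
binary indicator variables `z1,…,z5` of the five operating zones. -/
def BigMConstraints (Qmax V1 V2 V3 V4 M V Q z1 z2 z3 z4 z5 : ℝ) : Prop :=
  -- (21)
  V ≤ V1 + M * z1 ∧
  -- (22)
  (Qmax - M * z1 ≤ Q ∧ Q ≤ Qmax + M * z1) ∧
  -- (23)
  (V1 - M * z2 ≤ V ∧ V ≤ V2 + M * z2) ∧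
  -- (24)
  (-(M * z2) ≤ Q - Qmax * (V2 - V) / (V2 - V1) ∧
    Q - Qmax * (V2 - V) / (V2 - V1) ≤ M * z2) ∧
  -- (25)
  (V2 - M * z3 ≤ V ∧ V ≤ V3 + M * z3) ∧
  -- (26)
  (-(M * z3) ≤ Q ∧ Q ≤ M * z3) ∧
  -- (27)
  (V3 - M * z4 ≤ V ∧ V ≤ V4 + M * z4) ∧
  -- (28)
  (-(M * z4) ≤ Q + Qmax * (V - V3) / (V4 - V3) ∧
    Q + Qmax * (V - V3) / (V4 - V3) ≤ M * z4) ∧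
  -- (29)
  V4 - M * z5 ≤ V ∧
  -- (30)
  (-(M * z5) ≤ Q + Qmax ∧ Q + Qmax ≤ M * z5)

/-!
Binary indicators with sum at most four cannot all equal one. For an index `i` with `zᵢ = 0`
the Big-M terms `M * zᵢ` vanish, so the `i`-th pair of constraints confines `V` to the closed
`i`-th zone and forces `Q` onto the `i`-th affine piece. Because the droop curve is continuous,
it agrees with that piece on the whole closed zone, including the breakpoint where its `if`
already selects the neighbouring piece.
-/

lemma exists_eq_zero_of_sum_le_four {z1 z2 z3 z4 z5 : ℝ}
    (hz1 : z1 = 0 ∨ z1 = 1) (hz2 : z2 = 0 ∨ z2 = 1) (hz3 : z3 = 0 ∨ z3 = 1)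
    (hz4 : z4 = 0 ∨ z4 = 1) (hz5 : z5 = 0 ∨ z5 = 1)
    (hsum : z1 + z2 + z3 + z4 + z5 ≤ 4) :
    z1 = 0 ∨ z2 = 0 ∨ z3 = 0 ∨ z4 = 0 ∨ z5 = 0 := by
  by_contra! h
  obtain ⟨h1, h2, h3, h4, h5⟩ := h
  linarith [hz1.resolve_left h1, hz2.resolve_left h2, hz3.resolve_left h3,
    hz4.resolve_left h4, hz5.resolve_left h5]

section voltVarDroop

variable {Qmax V1 V2 V3 V4 V : ℝ}

lemma voltVarDroop_of_le_V1 (h12 : V1 < V2) (hV : V ≤ V1) :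
    voltVarDroop Qmax V1 V2 V3 V4 V = Qmax := by
  rcases hV.lt_or_eq with hlt | rfl
  · simp [voltVarDroop, hlt]
  · simp [voltVarDroop, h12, mul_div_assoc, div_self (sub_pos.2 h12).ne']

lemma voltVarDroop_of_mem_Icc_V1_V2 (h23 : V2 < V3) (hV : V ∈ Set.Icc V1 V2) :
    voltVarDroop Qmax V1 V2 V3 V4 V = Qmax * (V2 - V) / (V2 - V1) := by
  obtain ⟨hV1, hV2⟩ := hV
  rcases hV2.lt_or_eq with hlt | rfl
  · simp [voltVarDroop, hV1.not_gt, hlt]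
  · simp [voltVarDroop, hV1.not_gt, h23]

lemma voltVarDroop_of_mem_Icc_V2_V3 (h12 : V1 < V2) (h34 : V3 < V4)
    (hV : V ∈ Set.Icc V2 V3) :
    voltVarDroop Qmax V1 V2 V3 V4 V = 0 := by
  obtain ⟨hV2, hV3⟩ := hV
  have hV1 : ¬V < V1 := (h12.trans_le hV2).not_gt
  rcases hV3.lt_or_eq with hlt | rfl
  · simp [voltVarDroop, hV1, hV2.not_gt, hlt]
  · simp [voltVarDroop, hV1, hV2.not_gt, h34]

lemma voltVarDroop_of_mem_Icc_V3_V4 (h12 : V1 < V2) (h23 : V2 < V3) (h34 : V3 < V4)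
    (hV : V ∈ Set.Icc V3 V4) :
    voltVarDroop Qmax V1 V2 V3 V4 V = -Qmax * (V - V3) / (V4 - V3) := by
  obtain ⟨hV3, hV4⟩ := hV
  have hV1 : ¬V < V1 := by linarith
  have hV2 : ¬V < V2 := by linarith
  rcases hV4.lt_or_eq with hlt | rfl
  · simp [voltVarDroop, hV1, hV2, hV3.not_gt, hlt]
  · simp [voltVarDroop, hV1, hV2, hV3.not_gt, neg_div,
      mul_div_cancel_right₀ _ (sub_pos.2 h34).ne']

lemma voltVarDroop_of_V4_le (h12 : V1 < V2) (h23 : V2 < V3) (h34 : V3 < V4) (hV : V4 ≤ V) :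
    voltVarDroop Qmax V1 V2 V3 V4 V = -Qmax := by
  have hV1 : ¬V < V1 := by linarith
  have hV2 : ¬V < V2 := by linarith
  have hV3 : ¬V < V3 := by linarith
  simp [voltVarDroop, hV1, hV2, hV3, hV.not_gt]

end voltVarDroop

theorem bigM_forces_droop_general
    (Qmax V1 V2 V3 V4 M V Q z1 z2 z3 z4 z5 : ℝ)
    (h12 : V1 < V2) (h23 : V2 < V3) (h34 : V3 < V4)
    (hz1 : z1 = 0 ∨ z1 = 1) (hz2 : z2 = 0 ∨ z2 = 1) (hz3 : z3 = 0 ∨ z3 = 1)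
    (hz4 : z4 = 0 ∨ z4 = 1) (hz5 : z5 = 0 ∨ z5 = 1)
    (hsum : z1 + z2 + z3 + z4 + z5 ≤ 4)
    (hbig : BigMConstraints Qmax V1 V2 V3 V4 M V Q z1 z2 z3 z4 z5) :
    Q = voltVarDroop Qmax V1 V2 V3 V4 V := by
  obtain ⟨c21, c22, c23, c24, c25, c26, c27, c28, c29, c30⟩ := hbig
  rcases exists_eq_zero_of_sum_le_four hz1 hz2 hz3 hz4 hz5 hsum with rfl | rfl | rfl | rfl | rfl
    <;> simp only [mul_zero, neg_zero, add_zero, sub_zero] at *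
  · rw [voltVarDroop_of_le_V1 h12 c21]
    linarith [c22.1, c22.2]
  · rw [voltVarDroop_of_mem_Icc_V1_V2 h23 c23]
    linarith [c24.1, c24.2]
  · rw [voltVarDroop_of_mem_Icc_V2_V3 h12 h34 c25]
    linarith [c26.1, c26.2]
  · rw [voltVarDroop_of_mem_Icc_V3_V4 h12 h23 h34 c27, neg_mul, neg_div]
    linarith [c28.1, c28.2]
  · rw [voltVarDroop_of_V4_le h12 h23 h34 c29]
    linarith [c30.1, c30.2]

/-- the Big-M mixed-integer constraints (21)–(31) force the inverter's
reactive power output to lie exactly on the IEEE 1547-2018 Volt-VAr droop curve. -/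
theorem bigM_forces_droop
    (Qmax V1 V2 V3 V4 M V Q z1 z2 z3 z4 z5 : ℝ)
    (hQmax : 0 < Qmax) (h12 : V1 < V2) (h23 : V2 < V3) (h34 : V3 < V4)
    (hz1 : z1 = 0 ∨ z1 = 1) (hz2 : z2 = 0 ∨ z2 = 1) (hz3 : z3 = 0 ∨ z3 = 1)
    (hz4 : z4 = 0 ∨ z4 = 1) (hz5 : z5 = 0 ∨ z5 = 1)
    (hsum : z1 + z2 + z3 + z4 + z5 ≤ 4)
    (hbig : BigMConstraints Qmax V1 V2 V3 V4 M V Q z1 z2 z3 z4 z5) :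
    Q = voltVarDroop Qmax V1 V2 V3 V4 V :=
  bigM_forces_droop_general Qmax V1 V2 V3 V4 M V Q z1 z2 z3 z4 z5 h12 h23 h34 hz1 hz2 hz3 hz4 hz5
    hsum hbig
end

section
/- Let Vmin ≤ V1 and V4 ≤ Vmax, let V be a real number with Vmin ≤ V ≤ Vmax, let Q = f(V), and let M ≥ 2·Qmax + (Vmax − Vmin)·(1 + Qmax/min(V2 − V1, V4 − V3)). Then there exist binaries z1, z2, z3, z4, z5 ∈ {0,1} with z1 + z2 + z3 + z4 + z5 ≤ 4 such that all of the Big-M constraints (21)–(30) are satisfied. In other words, every point on the Volt-VAr droop curve is feasible for the Big-M mixed-integer formulation when M is sufficiently large. -/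
theorem abs_mul_div_le_abs {q x d : ℝ} (h : |x| ≤ |d|) : |q * x / d| ≤ |q| := by
  rw [mul_div_assoc, abs_mul, abs_div]
  exact mul_le_of_le_one_right (abs_nonneg q) (div_le_one_of_le₀ h (abs_nonneg d))

theorem abs_mul_div_le_div_mul {q x d m w : ℝ} (hq : 0 ≤ q) (hm : 0 < m) (hmd : m ≤ d)
    (hx : |x| ≤ w) : |q * x / d| ≤ q / m * w := by
  rw [abs_div, abs_mul, abs_of_nonneg hq, abs_of_pos (hm.trans_le hmd), div_mul_eq_mul_div]
  have : 0 ≤ w := (abs_nonneg x).trans hx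
  gcongr

theorem abs_voltVarDroop_le {Qmax : ℝ} (hQmax : 0 ≤ Qmax) (V1 V2 V3 V4 V : ℝ) :
    |voltVarDroop Qmax V1 V2 V3 V4 V| ≤ Qmax := by
  unfold voltVarDroop
  split_ifs with h1 h2 h3 h4
  · exact (abs_of_nonneg hQmax).le
  · have hV : |V2 - V| ≤ |V2 - V1| := abs_le_abs (by linarith) (by linarith)
    simpa [abs_of_nonneg hQmax] using abs_mul_div_le_abs (q := Qmax) hV
  · simpa using hQmax
  · have hV : |V - V3| ≤ |V4 - V3| := abs_le_abs (by linarith) (by linarith)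
    simpa [abs_of_nonneg hQmax] using abs_mul_div_le_abs (q := -Qmax) hV
  · rw [abs_neg, abs_of_nonneg hQmax]

theorem bigMConstraints_ones {Qmax V1 V2 V3 V4 Vmin Vmax M V Q : ℝ} (hQmax : 0 ≤ Qmax)
    (h12 : V1 < V2) (h23 : V2 ≤ V3) (h34 : V3 < V4) (hVmin : Vmin ≤ V1) (hVmax : V4 ≤ Vmax)
    (hVlo : Vmin ≤ V) (hVhi : V ≤ Vmax) (hQ : |Q| ≤ Qmax)
    (hM : 2 * Qmax + (Vmax - Vmin) * (1 + Qmax / min (V2 - V1) (V4 - V3)) ≤ M) :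
    BigMConstraints Qmax V1 V2 V3 V4 M V Q 1 1 1 1 1 := by
  set D := Vmax - Vmin
  set m := min (V2 - V1) (V4 - V3)
  have hm : 0 < m := lt_min (sub_pos.2 h12) (sub_pos.2 h34)
  have hslope : 0 ≤ Qmax / m * D := mul_nonneg (div_nonneg hQmax hm.le) (by linarith)
  have hs2 : |Qmax * (V2 - V) / (V2 - V1)| ≤ Qmax / m * D :=
    abs_mul_div_le_div_mul hQmax hm (min_le_left _ _) (abs_le.2 ⟨by linarith, by linarith⟩)
  have hs4 : |Qmax * (V - V3) / (V4 - V3)| ≤ Qmax / m * D :=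
    abs_mul_div_le_div_mul hQmax hm (min_le_right _ _) (abs_le.2 ⟨by linarith, by linarith⟩)
  rw [abs_le] at hQ hs2 hs4
  simp only [BigMConstraints, mul_one]
  constructorm* _ ∧ _ <;> linarith

namespace BigMConstraints

variable {Qmax V1 V2 V3 V4 M V Q : ℝ}

theorem select_zone1 (h : BigMConstraints Qmax V1 V2 V3 V4 M V Q 1 1 1 1 1)
    (hV : V ≤ V1) (hQ : Q = Qmax) :
    BigMConstraints Qmax V1 V2 V3 V4 M V Q 0 1 1 1 1 := by
  obtain ⟨-, -, h23, h24, h25, h26, h27, h28, h29, h30⟩ := h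
  simp only [BigMConstraints, mul_zero, add_zero, sub_zero]
  exact ⟨hV, ⟨hQ.ge, hQ.le⟩, h23, h24, h25, h26, h27, h28, h29, h30⟩

theorem select_zone2 (h : BigMConstraints Qmax V1 V2 V3 V4 M V Q 1 1 1 1 1)
    (hV1 : V1 ≤ V) (hV2 : V ≤ V2) (hQ : Q = Qmax * (V2 - V) / (V2 - V1)) :
    BigMConstraints Qmax V1 V2 V3 V4 M V Q 1 0 1 1 1 := by
  obtain ⟨h21, h22, -, -, h25, h26, h27, h28, h29, h30⟩ := h
  simp only [BigMConstraints, mul_zero, add_zero, sub_zero, neg_zero, sub_eq_zero.2 hQ]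
  exact ⟨h21, h22, ⟨hV1, hV2⟩, ⟨le_rfl, le_rfl⟩, h25, h26, h27, h28, h29, h30⟩

theorem select_zone3 (h : BigMConstraints Qmax V1 V2 V3 V4 M V Q 1 1 1 1 1)
    (hV2 : V2 ≤ V) (hV3 : V ≤ V3) (hQ : Q = 0) :
    BigMConstraints Qmax V1 V2 V3 V4 M V Q 1 1 0 1 1 := by
  obtain ⟨h21, h22, h23, h24, -, -, h27, h28, h29, h30⟩ := h
  simp only [BigMConstraints, mul_zero, add_zero, sub_zero, neg_zero]
  exact ⟨h21, h22, h23, h24, ⟨hV2, hV3⟩, ⟨hQ.ge, hQ.le⟩, h27, h28, h29, h30⟩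

theorem select_zone4 (h : BigMConstraints Qmax V1 V2 V3 V4 M V Q 1 1 1 1 1)
    (hV3 : V3 ≤ V) (hV4 : V ≤ V4) (hQ : Q = -Qmax * (V - V3) / (V4 - V3)) :
    BigMConstraints Qmax V1 V2 V3 V4 M V Q 1 1 1 0 1 := by
  obtain ⟨h21, h22, h23, h24, h25, h26, -, -, h29, h30⟩ := h
  have hQ' : Q + Qmax * (V - V3) / (V4 - V3) = 0 := by rw [hQ]; ring
  simp only [BigMConstraints, mul_zero, add_zero, sub_zero, neg_zero, hQ']
  exact ⟨h21, h22, h23, h24, h25, h26, ⟨hV3, hV4⟩, ⟨le_rfl, le_rfl⟩, h29, h30⟩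

theorem select_zone5 (h : BigMConstraints Qmax V1 V2 V3 V4 M V Q 1 1 1 1 1)
    (hV : V4 ≤ V) (hQ : Q = -Qmax) :
    BigMConstraints Qmax V1 V2 V3 V4 M V Q 1 1 1 1 0 := by
  obtain ⟨h21, h22, h23, h24, h25, h26, h27, h28, -, -⟩ := h
  have hQ' : Q + Qmax = 0 := by rw [hQ, neg_add_cancel]
  simp only [BigMConstraints, mul_zero, sub_zero, neg_zero, hQ']
  exact ⟨h21, h22, h23, h24, h25, h26, h27, h28, hV, ⟨le_rfl, le_rfl⟩⟩

end BigMConstraints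

/-- every point on the Volt-VAr droop curve is feasible for the Big-M
mixed-integer formulation (21)–(31) when `M` is sufficiently large. -/
theorem droop_feasible_for_bigM
    (Qmax V1 V2 V3 V4 Vmin Vmax M V Q : ℝ)
    (hQmax : 0 < Qmax) (h12 : V1 < V2) (h23 : V2 < V3) (h34 : V3 < V4)
    (hVmin : Vmin ≤ V1) (hVmax : V4 ≤ Vmax)
    (hVlo : Vmin ≤ V) (hVhi : V ≤ Vmax)
    (hQ : Q = voltVarDroop Qmax V1 V2 V3 V4 V)
    (hM : 2 * Qmax + (Vmax - Vmin) * (1 + Qmax / min (V2 - V1) (V4 - V3)) ≤ M) :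
    ∃ z1 z2 z3 z4 z5 : ℝ,
      (z1 = 0 ∨ z1 = 1) ∧ (z2 = 0 ∨ z2 = 1) ∧ (z3 = 0 ∨ z3 = 1) ∧
      (z4 = 0 ∨ z4 = 1) ∧ (z5 = 0 ∨ z5 = 1) ∧
      z1 + z2 + z3 + z4 + z5 ≤ 4 ∧
      BigMConstraints Qmax V1 V2 V3 V4 M V Q z1 z2 z3 z4 z5 := by
  have hslack : BigMConstraints Qmax V1 V2 V3 V4 M V Q 1 1 1 1 1 :=
    bigMConstraints_ones hQmax.le h12 h23.le h34 hVmin hVmax hVlo hVhi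
      (hQ ▸ abs_voltVarDroop_le hQmax.le V1 V2 V3 V4 V) hM
  unfold voltVarDroop at hQ
  split_ifs at hQ with h1 h2 h3 h4
  · refine ⟨_, _, _, _, _, ?_, ?_, ?_, ?_, ?_, ?_,
      hslack.select_zone1 h1.le hQ⟩ <;> norm_num
  · refine ⟨_, _, _, _, _, ?_, ?_, ?_, ?_, ?_, ?_,
      hslack.select_zone2 (not_lt.1 h1) h2.le hQ⟩ <;> norm_num
  · refine ⟨_, _, _, _, _, ?_, ?_, ?_, ?_, ?_, ?_,
      hslack.select_zone3 (not_lt.1 h2) h3.le hQ⟩ <;> norm_num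
  · refine ⟨_, _, _, _, _, ?_, ?_, ?_, ?_, ?_, ?_,
      hslack.select_zone4 (not_lt.1 h3) h4.le hQ⟩ <;> norm_num
  · refine ⟨_, _, _, _, _, ?_, ?_, ?_, ?_, ?_, ?_,
      hslack.select_zone5 (not_lt.1 h4) hQ⟩ <;> norm_num
end

section
/- Let (Vr0, Vim0) be a pair of real numbers with (Vr0, Vim0) ≠ (0, 0). For all real numbers Vr, Vim, the error of the linearized voltage magnitude satisfies 0 ≤ √(Vr² + Vim²) − (Vr0·Vr + Vim0·Vim)/√(Vr0² + Vim0²) ≤ ((Vr − Vr0)² + (Vim − Vim0)²)/(2·√(Vr0² + Vim0²)). That is, the first-order approximation (11) of the voltage magnitude has an error that is nonnegative and at most quadratic in the distance from the linearization point. -/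
/-!
View the phasors `x₀ = Vr0 + i Vim0` and `x = Vr + i Vim` in `ℂ` as a real inner product space. The linearization is `⟪x₀, x⟫ / ‖x₀‖`, which is at most `‖x‖` by Cauchy–Schwarz.
Expanding `‖x - x₀‖² = ‖x‖² - 2⟪x₀, x⟫ + ‖x₀‖²` shows that the gap between the quadratic bound and
the error is the perfect square `(‖x‖ - ‖x₀‖)² / (2‖x₀‖)`.
-/

open RealInnerProductSpace

section InnerProductSpace

variable {E : Type*} [NormedAddCommGroup E] [InnerProductSpace ℝ E]

theorem real_inner_div_norm_le_norm (x₀ x : E) : ⟪x₀, x⟫ / ‖x₀‖ ≤ ‖x‖ := by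
  rcases (norm_nonneg x₀).eq_or_lt with h | h
  · simp [← h]
  · exact div_le_of_le_mul₀ h.le (norm_nonneg x) (by simpa [mul_comm] using real_inner_le_norm x₀ x)

theorem norm_sub_sq_div_sub_linearization_eq {x₀ : E} (hx₀ : x₀ ≠ 0) (x : E) :
    ‖x - x₀‖ ^ 2 / (2 * ‖x₀‖) - (‖x‖ - ⟪x₀, x⟫ / ‖x₀‖) = (‖x‖ - ‖x₀‖) ^ 2 / (2 * ‖x₀‖) := by
  have hnorm : ‖x₀‖ ≠ 0 := norm_ne_zero_iff.mpr hx₀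
  rw [norm_sub_sq_real, real_inner_comm]
  field_simp
  ring

theorem norm_sub_linearization_le {x₀ : E} (hx₀ : x₀ ≠ 0) (x : E) :
    ‖x‖ - ⟪x₀, x⟫ / ‖x₀‖ ≤ ‖x - x₀‖ ^ 2 / (2 * ‖x₀‖) := by
  have hgap := norm_sub_sq_div_sub_linearization_eq hx₀ x
  have : 0 ≤ (‖x‖ - ‖x₀‖) ^ 2 / (2 * ‖x₀‖) := by positivity
  linarith

end InnerProductSpace

theorem Complex.real_inner_mk (a b c d : ℝ) : ⟪(⟨a, b⟩ : ℂ), ⟨c, d⟩⟫ = a * c + b * d := by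
  simp only [Complex.inner, mul_re, conj_re, conj_im, mul_neg, sub_neg_eq_add]
  ring

/-- the error of the linearized voltage magnitude (11) is nonnegative
and at most quadratic in the distance from the linearization point. -/
theorem voltage_magnitude_linearization_error_bound
    (Vr0 Vim0 : ℝ) (h0 : (Vr0, Vim0) ≠ ((0 : ℝ), (0 : ℝ))) :
    ∀ Vr Vim : ℝ,
      0 ≤ Real.sqrt (Vr ^ 2 + Vim ^ 2)
          - (Vr0 * Vr + Vim0 * Vim) / Real.sqrt (Vr0 ^ 2 + Vim0 ^ 2) ∧
      Real.sqrt (Vr ^ 2 + Vim ^ 2)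
          - (Vr0 * Vr + Vim0 * Vim) / Real.sqrt (Vr0 ^ 2 + Vim0 ^ 2)
        ≤ ((Vr - Vr0) ^ 2 + (Vim - Vim0) ^ 2)
            / (2 * Real.sqrt (Vr0 ^ 2 + Vim0 ^ 2)) := by
  intro Vr Vim
  set x₀ : ℂ := ⟨Vr0, Vim0⟩
  set x : ℂ := ⟨Vr, Vim⟩
  have hx₀ : x₀ ≠ 0 := fun h ↦ h0 (by simpa [x₀, Complex.ext_iff] using h)
  have hdist : (Vr - Vr0) ^ 2 + (Vim - Vim0) ^ 2 = ‖x - x₀‖ ^ 2 := by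
    rw [Complex.sq_norm, Complex.normSq_apply]
    simp only [Complex.sub_re, Complex.sub_im, x, x₀]
    ring
  rw [hdist, ← Complex.real_inner_mk, ← Complex.norm_eq_sqrt_sq_add_sq x,
    ← Complex.norm_eq_sqrt_sq_add_sq x₀]
  exact ⟨sub_nonneg.mpr (real_inner_div_norm_le_norm x₀ x), norm_sub_linearization_le hx₀ x⟩
end
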